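/- arXiv:math/0603211 — 5 statements merged into one kernel-verified Lean document; each statement's English description precedes it below -/
import Mathlib

section
/- The integral closure of an ideal I in a commutative ring R, defined as the set of x in R satisfying an equation x^n + a_1 x^{n-1} + ... + a_n = 0 with a_j in I^j, is itself an ideal of R. -/
/-!
An element `x` is integral over `I` exactly when `x t` is integral over the Rees algebra
`R[I t] ⊆ R[t]`: the degree-`n` coefficient of a monic equation for `x t` over `R[I t]` is an
equation of integral dependence for `x` over `I`, and conversely such an equation, multiplied
by `t ^ n`, is a monic equation for `x t`. The integral closure of `R[I t]` in `R[t]` is a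
subalgebra, so its preimage under the `R`-linear map `x ↦ x t` is an ideal.
-/

/-- The set of elements of `R` integral over the ideal `I`: `x` satisfying
`x ^ n + a 1 * x ^ (n-1) + ⋯ + a n = 0` with `a j ∈ I ^ j`. -/
def Ideal.intCl {R : Type*} [CommRing R] (I : Ideal R) : Set R :=
  {x | ∃ n : ℕ, 0 < n ∧ ∃ a : ℕ → R,
    (∀ j ∈ Finset.Icc 1 n, a j ∈ I ^ j) ∧
    x ^ n + ∑ j ∈ Finset.Icc 1 n, a j * x ^ (n - j) = 0}

/-- Minimal number of generators of an ideal. -/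
noncomputable def Ideal.mu {R : Type*} [CommRing R] (I : Ideal R) : ℕ :=
  sInf {n : ℕ | ∃ s : Finset R, s.card = n ∧ Ideal.span (s : Set R) = I}

/-- The `M`-adic order of an ideal `I`. -/
noncomputable def Ideal.ord {R : Type*} [CommRing R] (M I : Ideal R) : ℕ :=
  sSup {n : ℕ | I ≤ M ^ n}

open Polynomial Finset

theorem Polynomial.coeff_mul_monomial_one_pow {R : Type*} [CommSemiring R] (f : R[X]) (x : R)
    {i n : ℕ} (hi : i ≤ n) : (f * monomial 1 x ^ i).coeff n = f.coeff (n - i) * x ^ i := by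
  rw [monomial_pow, one_mul]
  conv_lhs => rw [← Nat.sub_add_cancel hi, coeff_mul_monomial]

section

variable {R : Type*} [CommRing R] {I : Ideal R} {x : R}

theorem Ideal.mem_intCl_of_aeval_monomial_one_eq_zero {p : (reesAlgebra I)[X]} (hp : p.Monic)
    (hn : 0 < p.natDegree) (h : aeval (monomial 1 x : R[X]) p = 0) : x ∈ I.intCl := by
  set n := p.natDegree
  set a : ℕ → R := fun k => (p.coeff (n - k) : R[X]).coeff k
  have ha_zero : a 0 = 1 := by simp [a, n, hp.coeff_natDegree]
  have hsum : ∑ k ∈ range (n + 1), a k * x ^ (n - k) = 0 := by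
    have h_n := congrArg (coeff · n) h
    simp only [aeval_eq_sum_range, Subalgebra.smul_def, smul_eq_mul, finsetSum_coeff,
      coeff_zero] at h_n
    rw [← sum_range_reflect, ← h_n]
    refine sum_congr rfl fun i hi => ?_
    have hi : i ≤ n := Nat.lt_succ_iff.mp (mem_range.mp hi)
    simp only [a, coeff_mul_monomial_one_pow _ _ hi, Nat.add_sub_cancel, Nat.sub_sub_self hi]
  refine ⟨n, hn, a, fun k _ => (mem_reesAlgebra_iff _ _).1 (p.coeff _).2 k, ?_⟩
  rwa [Nat.range_succ_eq_Icc_zero, ← insert_Icc_add_one_left_eq_Icc n.zero_le,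
    sum_insert (by simp), ha_zero, one_mul, Nat.sub_zero, zero_add] at hsum

theorem Ideal.isIntegral_monomial_one_of_mem_intCl (hx : x ∈ I.intCl) :
    IsIntegral (reesAlgebra I) (monomial 1 x : R[X]) := by
  obtain ⟨n, hn, a, ha, hx⟩ := hx
  set P : R[X][X] := X ^ n + ∑ j ∈ Icc 1 n, C (monomial j (a j)) * X ^ (n - j)
  have hP_monic : P.Monic := by
    refine monic_X_pow_add ((degree_sum_le _ _).trans_lt ?_)
    refine (Finset.sup_lt_iff (WithBot.bot_lt_coe n)).2 fun j hj => ?_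
    exact (degree_C_mul_X_pow_le _ _).trans_lt
      (WithBot.coe_lt_coe.mpr (Nat.sub_lt hn (mem_Icc.mp hj).1))
  have hP_lifts : P ∈ lifts (algebraMap (reesAlgebra I) R[X]) := by
    refine add_mem (X_pow_mem_lifts _ _)
      (_root_.sum_mem fun j hj => mul_mem ?_ (X_pow_mem_lifts _ _))
    exact C_mem_lifts _
      (⟨monomial j (a j), reesAlgebra.monomial_mem.mpr (ha j hj)⟩ : reesAlgebra I)
  have hP_eval :
      P.eval (monomial 1 x) = monomial n (x ^ n + ∑ j ∈ Icc 1 n, a j * x ^ (n - j)) := by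
    simp only [P, eval_add, eval_finsetSum, eval_mul, eval_C, eval_pow, eval_X, monomial_pow,
      one_mul, monomial_mul_monomial, map_add, map_sum]
    congr 1
    refine sum_congr rfl fun j hj => ?_
    rw [Nat.add_sub_cancel' (mem_Icc.mp hj).2]
  obtain ⟨q, hq_map, -, hq_monic⟩ := lifts_and_natDegree_eq_and_monic hP_lifts hP_monic
  exact ⟨q, hq_monic, by rw [eval₂_eq_eval_map, hq_map, hP_eval, hx, monomial_zero_right]⟩

theorem Ideal.mem_intCl_iff_isIntegral_monomial_one :
    x ∈ I.intCl ↔ IsIntegral (reesAlgebra I) (monomial 1 x : R[X]) := by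
  refine ⟨isIntegral_monomial_one_of_mem_intCl, fun ⟨p, hp, h⟩ => ?_⟩
  rcases subsingleton_or_nontrivial R with _ | _
  · exact ⟨1, one_pos, 0, fun j _ => zero_mem _, Subsingleton.elim _ _⟩
  refine mem_intCl_of_aeval_monomial_one_eq_zero (monic_X.mul hp) ?_ ?_
  · rw [natDegree_X_mul hp.ne_zero]
    exact Nat.succ_pos _
  · rw [map_mul, aeval_X, aeval_def, h, mul_zero]

end

/-- The integral closure of an ideal is itself an ideal. -/
theorem intCl_isIdeal {R : Type*} [CommRing R] (I : Ideal R) :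
    ∃ J : Ideal R, (J : Set R) = I.intCl :=
  ⟨((integralClosure (reesAlgebra I) R[X]).restrictScalars R).toSubmodule.comap (monomial 1),
    Set.ext fun _ => Ideal.mem_intCl_iff_isIntegral_monomial_one.symm⟩
end

section
/- If I and J are ideals of a commutative ring R, then the integral closure of IJ equals the integral closure of the product of the integral closures of I and J; that is, the *-product satisfies I * J = (closure of I) * (closure of J). -/
open Polynomial

section Aux

variable {R : Type*} [CommRing R]

/-- The bigraded Rees algebra `R[It, Js]` inside `R[t][s]`. -/
def biRees (I J : Ideal R) : Subalgebra R (Polynomial (Polynomial R)) where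
  carrier := {f | ∀ i j, (f.coeff j).coeff i ∈ I ^ i * J ^ j}
  add_mem' := by
    intro f g hf hg i j
    simp only [Polynomial.coeff_add]
    exact add_mem (hf i j) (hg i j)
  mul_mem' := by
    intro f g hf hg i j
    rw [Polynomial.coeff_mul, Polynomial.finset_sum_coeff]
    refine Submodule.sum_mem _ ?_
    rintro ⟨j1, j2⟩ hjj
    rw [Polynomial.coeff_mul]
    refine Submodule.sum_mem _ ?_
    rintro ⟨i1, i2⟩ hii
    have h1 : I ^ i1 * J ^ j1 * (I ^ i2 * J ^ j2) = I ^ i * J ^ j := by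
      rw [mul_mul_mul_comm, ← pow_add, ← pow_add,
        Finset.HasAntidiagonal.mem_antidiagonal.mp hii, Finset.HasAntidiagonal.mem_antidiagonal.mp hjj]
    exact h1 ▸ Ideal.mul_mem_mul (hf i1 j1) (hg i2 j2)
  one_mem' := by
    intro i j
    simp only [Polynomial.coeff_one]
    split_ifs with h
    · subst h
      simp only [Polynomial.coeff_one]
      split_ifs with h'
      · subst h'; simpa using Submodule.mem_top
      · exact zero_mem _
    · simp only [Polynomial.coeff_zero]; exact zero_mem _
  zero_mem' := by intro i j; simp only [Polynomial.coeff_zero]; exact zero_mem _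
  algebraMap_mem' := by
    intro r i j
    simp only [Polynomial.algebraMap_apply, Algebra.algebraMap_self_apply, Polynomial.coeff_C]
    split_ifs with h
    · subst h
      simp only [Polynomial.coeff_C]
      split_ifs with h'
      · subst h'; simpa using Submodule.mem_top
      · exact zero_mem _
    · simp only [Polynomial.coeff_zero]; exact zero_mem _

theorem monic_aux {S : Type*} [CommRing S] {n : ℕ} (hn : 0 < n) (c : ℕ → S) :
    (X ^ n + ∑ j ∈ Finset.Icc 1 n, C (c j) * X ^ (n - j)).Monic := by
  refine monic_X_pow_add ?_
  refine lt_of_le_of_lt (Polynomial.degree_sum_le _ _) ?_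
  rw [Finset.sup_lt_iff (by exact_mod_cast WithBot.bot_lt_coe n)]
  intro j hj
  refine lt_of_le_of_lt (Polynomial.degree_C_mul_X_pow_le _ _) ?_
  exact_mod_cast Nat.sub_lt hn (Finset.mem_Icc.mp hj).1

/-- If `x` satisfies an equation of integral dependence over an ideal and `Φ` maps the
witnessing monomials into the image of `B`, then `Φ (monomial 1 x)` is integral over `B`. -/
theorem aux_int {A B : Type*} [CommRing A] [CommRing B] [Algebra R A] [Algebra B A]
    (Φ : Polynomial R →ₐ[R] A) {x : R} {n : ℕ} (hn : 0 < n) (a : ℕ → R)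
    (ha : ∀ j ∈ Finset.Icc 1 n, ∃ b : B, algebraMap B A b = Φ ((Polynomial.monomial j) (a j)))
    (heq : x ^ n + ∑ j ∈ Finset.Icc 1 n, a j * x ^ (n - j) = 0) :
    IsIntegral B (Φ ((Polynomial.monomial 1) x)) := by
  classical
  set c : ℕ → B := fun j =>
    if h : j ∈ Finset.Icc 1 n then (ha j h).choose else 0 with hc
  have hcs : ∀ j ∈ Finset.Icc 1 n,
      algebraMap B A (c j) = Φ ((Polynomial.monomial j) (a j)) := by
    intro j hj
    rw [hc]
    simp only [dif_pos hj]
    exact (ha j hj).choose_spec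
  refine ⟨X ^ n + ∑ j ∈ Finset.Icc 1 n, C (c j) * X ^ (n - j), monic_aux hn c, ?_⟩
  have hW : ∀ k : ℕ, Φ ((Polynomial.monomial 1) x) ^ k = Φ ((Polynomial.monomial k) (x ^ k)) := by
    intro k
    rw [← map_pow, Polynomial.monomial_pow, one_mul]
  rw [eval₂_add, eval₂_X_pow, eval₂_finset_sum]
  have hterm : ∀ j ∈ Finset.Icc 1 n,
      eval₂ (algebraMap B A) (Φ ((Polynomial.monomial 1) x)) (C (c j) * X ^ (n - j))
        = Φ ((Polynomial.monomial n) (a j * x ^ (n - j))) := by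
    intro j hj
    rw [eval₂_mul, eval₂_C, eval₂_X_pow, hW, hcs j hj, ← map_mul,
      Polynomial.monomial_mul_monomial, Nat.add_sub_cancel' (Finset.mem_Icc.mp hj).2]
  rw [Finset.sum_congr rfl hterm, hW, ← map_sum Φ, ← map_add Φ,
    ← map_sum (Polynomial.monomial n), ← map_add (Polynomial.monomial n), heq, map_zero, map_zero]

set_option synthInstance.maxHeartbeats 1000000 in
set_option maxHeartbeats 1000000 in
/-- Variant of `aux_int` landing in an integral closure, using transitivity. -/
theorem aux_int₂ {A R₀ : Type*} [CommRing A] [CommRing R₀] [Algebra R A] [Algebra R₀ A]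
    (S : Subalgebra R₀ A) (Φ : Polynomial R →ₐ[R] A) {x : R} {n : ℕ} (hn : 0 < n) (a : ℕ → R)
    (ha : ∀ j ∈ Finset.Icc 1 n, Φ ((Polynomial.monomial j) (a j)) ∈ integralClosure S A)
    (heq : x ^ n + ∑ j ∈ Finset.Icc 1 n, a j * x ^ (n - j) = 0) :
    Φ ((Polynomial.monomial 1) x) ∈ integralClosure S A := by
  have h1 : IsIntegral (↥(integralClosure S A)) (Φ ((Polynomial.monomial 1) x)) :=
    aux_int (B := ↥(integralClosure S A)) Φ hn a (fun j hj => ⟨⟨_, ha j hj⟩, rfl⟩) heq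
  exact isIntegral_trans (A := ↥(integralClosure S A)) _ h1

theorem mem_biRees_iff {I J : Ideal R} {f : Polynomial (Polynomial R)} :
    f ∈ biRees I J ↔ ∀ i j, (f.coeff j).coeff i ∈ I ^ i * J ^ j := Iff.rfl

theorem aeval_CX_monomial (k : ℕ) (r : R) :
    Polynomial.aeval (Polynomial.C Polynomial.X : Polynomial (Polynomial R))
      ((Polynomial.monomial k) r) = Polynomial.C ((Polynomial.monomial k) r) := by
  rw [Polynomial.aeval_monomial, ← Polynomial.C_pow, Polynomial.algebraMap_apply,
    Polynomial.algebraMap_apply, Algebra.algebraMap_self_apply, ← Polynomial.C_mul,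
    Polynomial.C_mul_X_pow_eq_monomial]

theorem aeval_X_monomial (k : ℕ) (r : R) :
    Polynomial.aeval (Polynomial.X : Polynomial (Polynomial R))
      ((Polynomial.monomial k) r) = (Polynomial.monomial k) (Polynomial.C r) := by
  rw [Polynomial.aeval_monomial, Polynomial.algebraMap_apply, Polynomial.algebraMap_apply,
    Algebra.algebraMap_self_apply, Polynomial.C_mul_X_pow_eq_monomial]

theorem aeval_CXX_monomial (k : ℕ) (r : R) :
    Polynomial.aeval (Polynomial.C Polynomial.X * Polynomial.X : Polynomial (Polynomial R))
      ((Polynomial.monomial k) r)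
      = (Polynomial.monomial k) ((Polynomial.monomial k) r) := by
  rw [Polynomial.aeval_monomial, mul_pow, ← Polynomial.C_pow, ← mul_assoc,
    Polynomial.algebraMap_apply, Polynomial.algebraMap_apply, Algebra.algebraMap_self_apply,
    ← Polynomial.C_mul, Polynomial.C_mul_X_pow_eq_monomial,
    Polynomial.C_mul_X_pow_eq_monomial]

theorem memT_t {I J : Ideal R} {k : ℕ} {r : R} (hr : r ∈ I ^ k) :
    (Polynomial.C ((Polynomial.monomial k) r) : Polynomial (Polynomial R)) ∈ biRees I J := by
  rw [mem_biRees_iff]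
  intro i j
  rw [Polynomial.coeff_C]
  split_ifs with h
  · subst h
    rw [Polynomial.coeff_monomial]
    split_ifs with h'
    · subst h'
      rw [pow_zero, mul_one]
      exact hr
    · exact zero_mem _
  · simp only [Polynomial.coeff_zero]
    exact zero_mem _

theorem memT_s {I J : Ideal R} {k : ℕ} {r : R} (hr : r ∈ J ^ k) :
    ((Polynomial.monomial k) (Polynomial.C r) : Polynomial (Polynomial R)) ∈ biRees I J := by
  rw [mem_biRees_iff]
  intro i j
  rw [Polynomial.coeff_monomial]
  split_ifs with h
  · subst h
    rw [Polynomial.coeff_C]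
    split_ifs with h'
    · subst h'
      rw [pow_zero, one_mul]
      exact hr
    · exact zero_mem _
  · simp only [Polynomial.coeff_zero]
    exact zero_mem _

theorem xt_mem {I J : Ideal R} {x : R} (hx : x ∈ I.intCl) :
    (Polynomial.C ((Polynomial.monomial 1) x) : Polynomial (Polynomial R)) ∈
      integralClosure (biRees I J) (Polynomial (Polynomial R)) := by
  obtain ⟨n, hn, a, ha, heq⟩ := hx
  have := aux_int (B := biRees I J)
    (Polynomial.aeval (Polynomial.C Polynomial.X : Polynomial (Polynomial R))) hn a
    (fun j hj => ⟨⟨_, memT_t (ha j hj)⟩, by rw [aeval_CX_monomial]; rfl⟩) heq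
  rwa [aeval_CX_monomial] at this

theorem ys_mem {I J : Ideal R} {y : R} (hy : y ∈ J.intCl) :
    ((Polynomial.monomial 1) (Polynomial.C y) : Polynomial (Polynomial R)) ∈
      integralClosure (biRees I J) (Polynomial (Polynomial R)) := by
  obtain ⟨n, hn, a, ha, heq⟩ := hy
  have := aux_int (B := biRees I J)
    (Polynomial.aeval (Polynomial.X : Polynomial (Polynomial R))) hn a
    (fun j hj => ⟨⟨_, memT_s (ha j hj)⟩, by rw [aeval_X_monomial]; rfl⟩) heq
  rwa [aeval_X_monomial] at this

theorem key_extract {I J : Ideal R} {z : R}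
    (h : ((Polynomial.monomial 1) ((Polynomial.monomial 1) z) : Polynomial (Polynomial R)) ∈
      integralClosure (biRees I J) (Polynomial (Polynomial R))) : z ∈ (I * J).intCl := by
  obtain ⟨p, pm, pe⟩ := h
  set n := p.natDegree with hndef
  rcases Nat.eq_zero_or_pos n with h0 | hpos
  · -- degenerate case: the ring is trivial
    have hp1 : p = 1 := pm.natDegree_eq_zero.mp h0
    rw [hp1, eval₂_one] at pe
    have h10 : (1 : R) = 0 := by
      have := congrArg (fun f => (Polynomial.coeff f 0).coeff 0) pe
      simpa using this
    refine ⟨1, one_pos, 0, by simp, ?_⟩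
    have hz : z = 0 := by rw [← mul_one z, h10, mul_zero]
    simp [hz]
  · rw [Polynomial.eval₂_eq_sum_range] at pe
    set w : Polynomial (Polynomial R) :=
      (Polynomial.monomial 1) ((Polynomial.monomial 1) z) with hw
    have hwk : ∀ k : ℕ, w ^ k = (Polynomial.monomial k) ((Polynomial.monomial k) (z ^ k)) := by
      intro k
      rw [hw, Polynomial.monomial_pow, Polynomial.monomial_pow]
      norm_num
    set b : ℕ → R := fun i =>
      (((p.coeff i : Polynomial (Polynomial R)).coeff (n - i)).coeff (n - i)) with hb
    have key : ∀ i ∈ Finset.range (n + 1),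
        (((algebraMap (biRees I J) (Polynomial (Polynomial R)) (p.coeff i) * w ^ i).coeff
            n).coeff n) = b i * z ^ i := by
      intro i hi
      have hni : n - i + i = n := Nat.sub_add_cancel (Nat.lt_succ_iff.mp (Finset.mem_range.mp hi))
      conv_lhs => rw [hwk i, ← hni]
      rw [Polynomial.coeff_mul_monomial, Polynomial.coeff_mul_monomial]
      rfl
    have pe' : ∑ i ∈ Finset.range (n + 1), b i * z ^ i = 0 := by
      have h2 := congrArg (fun f : Polynomial (Polynomial R) => (f.coeff n).coeff n) pe
      simp only [Polynomial.finset_sum_coeff, Polynomial.coeff_zero] at h2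
      rw [← Finset.sum_congr rfl key]
      exact h2
    rw [Finset.sum_range_succ] at pe'
    have hbn : b n = 1 := by
      have : p.coeff n = 1 := pm.coeff_natDegree
      rw [hb]
      simp [this]
    rw [hbn, one_mul] at pe'
    refine ⟨n, hpos, fun j => b (n - j), ?_, ?_⟩
    · intro j hj
      obtain ⟨hj1, hj2⟩ := Finset.mem_Icc.mp hj
      show b (n - j) ∈ (I * J) ^ j
      simp only [hb]
      rw [Nat.sub_sub_self hj2, mul_pow]
      exact (p.coeff (n - j)).2 j j
    · rw [← pe', add_comm]
      congr 1
      refine Finset.sum_nbij' (fun j => n - j) (fun i => n - i) ?_ ?_ ?_ ?_ ?_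
      · intro j hj
        obtain ⟨hj1, hj2⟩ := Finset.mem_Icc.mp hj
        exact Finset.mem_range.mpr (Nat.sub_lt hpos hj1)
      · intro i hi
        have := Finset.mem_range.mp hi
        exact Finset.mem_Icc.mpr ⟨Nat.le_sub_of_add_le (by omega), Nat.sub_le _ _⟩
      · intro j hj
        exact Nat.sub_sub_self (Finset.mem_Icc.mp hj).2
      · intro i hi
        exact Nat.sub_sub_self (Nat.le_of_lt (Finset.mem_range.mp hi))
      · intro j hj
        rfl

theorem subset_intCl (I : Ideal R) : (I : Set R) ⊆ I.intCl := by
  intro x hx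
  refine ⟨1, one_pos, fun _ => -x, ?_, ?_⟩
  · intro j hj
    rw [Finset.mem_Icc] at hj
    have : j = 1 := le_antisymm hj.2 hj.1
    subst this
    rw [pow_one]
    exact neg_mem hx
  · simp

theorem intCl_mono {I K : Ideal R} (h : I ≤ K) : I.intCl ⊆ K.intCl := by
  rintro x ⟨n, hn, a, ha, heq⟩
  exact ⟨n, hn, a, fun j hj => Ideal.pow_right_mono h j (ha j hj), heq⟩

end Aux

set_option maxHeartbeats 1000000 in
set_option synthInstance.maxHeartbeats 1000000 in
/-- The `*`-product satisfies `I * J = Ī * J̄`: the integral closure of `I J` equals the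
integral closure of the product of the integral closures of `I` and `J`. -/
theorem intCl_mul_eq_intCl_mul_intCl {R : Type*} [CommRing R] (I J : Ideal R)
    (Ic Jc : Ideal R) (hIc : (Ic : Set R) = I.intCl) (hJc : (Jc : Set R) = J.intCl) :
    (I * J).intCl = (Ic * Jc).intCl := by
  have hI : I ≤ Ic := by
    intro r hr
    show r ∈ (Ic : Set R)
    rw [hIc]
    exact subset_intCl I hr
  have hJ : J ≤ Jc := by
    intro r hr
    show r ∈ (Jc : Set R)
    rw [hJc]
    exact subset_intCl J hr
  apply Set.Subset.antisymm
  · exact intCl_mono (Ideal.mul_mono hI hJ)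
  · rintro x ⟨n, hn, a, ha, heq⟩
    have prod1 : ∀ r ∈ Ic * Jc,
        ((Polynomial.monomial 1) ((Polynomial.monomial 1) r) : Polynomial (Polynomial R)) ∈ integralClosure (biRees I J) (Polynomial (Polynomial R)) := by
      intro r hr
      refine Submodule.mul_induction_on hr ?_ ?_
      · intro u hu v hv
        have hu' : u ∈ I.intCl := by rw [← hIc]; exact hu
        have hv' : v ∈ J.intCl := by rw [← hJc]; exact hv
        have hsplit : ((Polynomial.monomial 1) ((Polynomial.monomial 1) (u * v)) : Polynomial (Polynomial R))
            = Polynomial.C ((Polynomial.monomial 1) u) *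
              (Polynomial.monomial 1) (Polynomial.C v) := by
          rw [Polynomial.C_mul_monomial]
          congr 1
          rw [mul_comm ((Polynomial.monomial 1) u) (Polynomial.C v), Polynomial.C_mul_monomial,
            mul_comm v u]
        rw [hsplit]
        exact mul_mem (xt_mem hu') (ys_mem hv')
      · intro f g hf hg
        rw [map_add, map_add]
        exact add_mem hf hg
    have prodpow : ∀ (j : ℕ) (r : R), r ∈ (Ic * Jc) ^ j →
        ((Polynomial.monomial j) ((Polynomial.monomial j) r) : Polynomial (Polynomial R)) ∈ integralClosure (biRees I J) (Polynomial (Polynomial R)) := by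
      intro j
      induction j with
      | zero =>
        intro r _
        have h0 : ((Polynomial.monomial 0) ((Polynomial.monomial 0) r) : Polynomial (Polynomial R))
            = algebraMap R (Polynomial (Polynomial R)) r := by
          rw [Polynomial.monomial_zero_left, Polynomial.monomial_zero_left,
            Polynomial.algebraMap_apply, Polynomial.algebraMap_apply, Algebra.algebraMap_self_apply]
        rw [h0]
        have hmem : algebraMap R (Polynomial (Polynomial R)) r ∈ biRees I J :=
          (biRees I J).algebraMap_mem r
        exact (integralClosure (biRees I J) (Polynomial (Polynomial R))).algebraMap_mem
          ⟨algebraMap R (Polynomial (Polynomial R)) r, hmem⟩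
      | succ j ih =>
        intro r hr
        rw [pow_succ] at hr
        refine Submodule.mul_induction_on hr ?_ ?_
        · intro m hm k hk
          have hsplit : ((Polynomial.monomial (j + 1)) ((Polynomial.monomial (j + 1)) (m * k)) : Polynomial (Polynomial R))
              = (Polynomial.monomial j) ((Polynomial.monomial j) m) *
                (Polynomial.monomial 1) ((Polynomial.monomial 1) k) := by
            rw [Polynomial.monomial_mul_monomial, Polynomial.monomial_mul_monomial]
          rw [hsplit]
          exact mul_mem (ih m hm) (prod1 k hk)
        · intro f g hf hg
          rw [map_add, map_add]
          exact add_mem hf hg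
    have hmain := aux_int₂ (biRees I J)
      (Polynomial.aeval (Polynomial.C Polynomial.X * Polynomial.X : Polynomial (Polynomial R)))
      hn a (fun j hj => by rw [aeval_CXX_monomial]; exact prodpow j (a j) (ha j hj)) heq
    rw [aeval_CXX_monomial] at hmain
    exact key_extract hmain
end

section
/- For the ideal I = (x^4, x^3 y, x^2 z, x^2 y^2, x y^2 z, x y z^2, x z^3, y^3, y^2 z^2, y z^3, z^5) in k[x,y,z], the element x y^2 z lies in the integral closure of MI but not in MI, where M = (x,y,z); in particular MI is not integrally closed. -/
noncomputable section
open MvPolynomial Pointwise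

variable {k : Type*}

/-- The variables of `k[x,y,z]`. -/
def px [CommSemiring k] : MvPolynomial (Fin 3) k := X 0
def py [CommSemiring k] : MvPolynomial (Fin 3) k := X 1
def pz [CommSemiring k] : MvPolynomial (Fin 3) k := X 2

lemma xy2z_not_mem_aux (k : Type*) [Field k] :
    (px * py ^ 2 * pz : MvPolynomial (Fin 3) k) ∉
      (Ideal.span {px, py, pz} *
        Ideal.span {px ^ 4, px ^ 3 * py, px ^ 2 * pz, px ^ 2 * py ^ 2,
          px * py ^ 2 * pz, px * py * pz ^ 2, px * pz ^ 3, py ^ 3, py ^ 2 * pz ^ 2,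
          py * pz ^ 3, pz ^ 5} : Ideal (MvPolynomial (Fin 3) k)) := by
  classical
  intro hmem
  set d : Fin 3 →₀ ℕ := Finsupp.single 0 1 + Finsupp.single 1 2 + Finsupp.single 2 1 with hd
  have hx : (px * py ^ 2 * pz : MvPolynomial (Fin 3) k) = monomial d 1 := by
    simp [px, py, pz, X, monomial_pow, monomial_mul, Finsupp.smul_single, hd]
  have key : ∀ f ∈ (Ideal.span
      ((({px, py, pz} : Set (MvPolynomial (Fin 3) k))) *
        ({px ^ 4, px ^ 3 * py, px ^ 2 * pz, px ^ 2 * py ^ 2,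
          px * py ^ 2 * pz, px * py * pz ^ 2, px * pz ^ 3, py ^ 3, py ^ 2 * pz ^ 2,
          py * pz ^ 3, pz ^ 5} : Set (MvPolynomial (Fin 3) k))) :
        Ideal (MvPolynomial (Fin 3) k)),
      ∀ p : MvPolynomial (Fin 3) k, coeff d (p * f) = 0 := by
    intro f hf
    induction hf using Submodule.span_induction with
    | mem g hg =>
      obtain ⟨a, ha, b, hb, hab⟩ := hg
      rw [← hab]
      simp only [Set.mem_insert_iff, Set.mem_singleton_iff] at ha hb
      rcases ha with rfl | rfl | rfl <;>
        rcases hb with rfl | rfl | rfl | rfl | rfl | rfl | rfl | rfl | rfl | rfl | rfl <;>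
      · intro p
        simp only [px, py, pz, X, monomial_pow, monomial_mul, one_pow, one_mul, mul_one,
          Finsupp.smul_single, smul_eq_mul]
        rw [coeff_mul_monomial', if_neg]
        intro h
        have h0 := h 0
        have h1 := h 1
        have h2 := h 2
        simp [hd, Finsupp.add_apply, Finsupp.single_apply] at h0 h1 h2
    | zero => intro p; simp
    | add u v _ _ ihu ihv => intro p; rw [mul_add, coeff_add, ihu p, ihv p, add_zero]
    | smul r g _ ih => intro p; rw [smul_eq_mul, ← mul_assoc]; exact ih (p * r)
  rw [Ideal.span_mul_span'] at hmem
  have hc := key _ hmem 1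
  rw [one_mul, hx, coeff_monomial, if_pos rfl] at hc
  exact one_ne_zero hc


/-- `x y² z` lies in the integral closure of `M I` but not in `M I`;
in particular `M I` is not integrally closed. -/
theorem xy2z_mem_intCl_MI_not_mem_MI (k : Type*) [Field k] :
    let R := MvPolynomial (Fin 3) k
    let M : Ideal R := Ideal.span {px, py, pz}
    let I : Ideal R := Ideal.span {px ^ 4, px ^ 3 * py, px ^ 2 * pz, px ^ 2 * py ^ 2,
      px * py ^ 2 * pz, px * py * pz ^ 2, px * pz ^ 3, py ^ 3, py ^ 2 * pz ^ 2,
      py * pz ^ 3, pz ^ 5}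
    px * py ^ 2 * pz ∈ (M * I).intCl ∧ px * py ^ 2 * pz ∉ M * I := by
  intro R M I
  constructor
  · refine ⟨2, by norm_num, fun j => if j = 2 then -((px * py ^ 2 * pz) ^ 2) else 0, ?_, ?_⟩
    · intro j hj
      simp only [Finset.mem_Icc] at hj
      obtain ⟨hj1, hj2⟩ := hj
      interval_cases j
      · simp
      · simp only [if_pos rfl]
        apply neg_mem
        have h1 : (py : MvPolynomial (Fin 3) k) * py ^ 3 ∈ M * I :=
          Ideal.mul_mem_mul (Ideal.subset_span (by simp)) (Ideal.subset_span (by simp))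
        have h2 : (pz : MvPolynomial (Fin 3) k) * (px ^ 2 * pz) ∈ M * I :=
          Ideal.mul_mem_mul (Ideal.subset_span (by simp)) (Ideal.subset_span (by simp))
        have he : ((px * py ^ 2 * pz) ^ 2 : MvPolynomial (Fin 3) k)
            = (py * py ^ 3) * (pz * (px ^ 2 * pz)) := by ring
        rw [he, pow_two]
        exact Ideal.mul_mem_mul h1 h2
    · have h12 : Finset.Icc 1 2 = ({1, 2} : Finset ℕ) := rfl
      rw [h12]
      simp
  · exact xy2z_not_mem_aux k

end
end

section
/- If I is a monomial ideal in k[x_1, ..., x_d] and M = (x_1, ..., x_d), then the product MI is again a monomial ideal, and the integral closure of a monomial ideal is a monomial ideal. -/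
/-- An ideal of `k[x₁,…,x_d]` generated by monomials. -/
def IsMonomialIdeal {k : Type*} [Field k] {d : ℕ} (I : Ideal (MvPolynomial (Fin d) k)) : Prop :=
  ∃ S : Set (Fin d →₀ ℕ), I = Ideal.span ((fun a => MvPolynomial.monomial a (1 : k)) '' S)

/-! `M I` is spanned by the products `x_i x^s` of generators, so it is monomial.

For the integral closure `Ī`, the element `x` is integral over `I` iff `x t` is integral over the
Rees algebra `R[It]`; this makes `Ī` an ideal. A term `c x^a` with `c ≠ 0` is integral over a
monomial ideal `I` iff `(x^a)^j ∈ I^j` for some `j ≥ 1` (compare the coefficients of `x^{na}` in an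
equation of integral dependence), a condition that does not depend on the field. Over
`K = Frac k[x]` the substitutions `x_i ↦ t_i x_i` map `I` into itself, hence also `Ī`, and the
weights `t^a = ∏ t_i^{a_i}` are pairwise distinct for `t_i = x_i`; a Vandermonde argument then shows
that every term of an element of `Ī` lies in `Ī`. -/

open Finset

namespace Ideal

open Polynomial

variable {R : Type*} [CommRing R] {I : Ideal R} {x : R}

theorem mem_intCl_iff_exists_sum_range :
    x ∈ I.intCl ↔ ∃ n, ∃ c : ℕ → R, (∀ i < n, c i ∈ I ^ (n - i)) ∧
      x ^ n + ∑ i ∈ range n, c i * x ^ i = 0 := by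
  have hreflect (f : ℕ → R) (n : ℕ) : ∑ j ∈ Icc 1 n, f j = ∑ i ∈ range n, f (n - i) := by
    rw [range_eq_Ico, sum_Ico_reflect f 0 n.le_succ, Nat.add_sub_cancel_left, Nat.sub_zero,
      Ico_add_one_right_eq_Icc]
  constructor
  · rintro ⟨n, -, a, ha, hax⟩
    refine ⟨n, fun i => a (n - i), fun i hi => ?_, ?_⟩
    · exact ha _ (mem_Icc.2 ⟨by omega, by omega⟩)
    · rw [← hax, hreflect]
      refine congrArg _ (sum_congr rfl fun i hi => ?_)
      rw [Nat.sub_sub_self (mem_range.1 hi).le]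
  · rintro ⟨n, c, hc, hcx⟩
    rcases n.eq_zero_or_pos with rfl | hn
    · have : Subsingleton R := subsingleton_of_zero_eq_one (by simpa using hcx.symm)
      exact ⟨1, one_pos, 0, fun _ _ => zero_mem _, Subsingleton.elim _ _⟩
    refine ⟨n, hn, fun j => c (n - j), fun j hj => ?_, ?_⟩
    · have := hc (n - j) (by simp at hj; omega)
      rwa [Nat.sub_sub_self (mem_Icc.1 hj).2] at this
    · rw [← hcx, hreflect]
      refine congrArg _ (sum_congr rfl fun i hi => ?_)
      dsimp only
      rw [Nat.sub_sub_self (mem_range.1 hi).le]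

theorem mem_intCl_iff_monomial_mem_integralClosure :
    x ∈ I.intCl ↔ monomial 1 x ∈ integralClosure (reesAlgebra I) R[X] := by
  rw [mem_intCl_iff_exists_sum_range]
  constructor
  · rintro ⟨n, c, hc, hcx⟩
    let b : Fin n → reesAlgebra I := fun i =>
      ⟨monomial (n - i) (c i), reesAlgebra.monomial_mem.2 (hc i i.2)⟩
    refine ⟨X ^ n + ∑ i, C (b i) * X ^ (i : ℕ), monic_X_pow_add (degree_sum_fin_lt b), ?_⟩
    have hterm (i : Fin n) :
        algebraMap _ R[X] (b i) * monomial 1 x ^ (i : ℕ) = monomial n (c i * x ^ (i : ℕ)) := by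
      change monomial (n - i) (c i) * _ = _
      rw [monomial_pow, one_mul, monomial_mul_monomial, Nat.sub_add_cancel i.2.le]
    rw [← aeval_def]
    simp only [map_add, map_pow, aeval_X, map_sum, map_mul, aeval_C, hterm]
    rw [monomial_pow, one_mul, ← map_sum, ← map_add,
      Fin.sum_univ_eq_sum_range (fun i => c i * x ^ i), hcx, map_zero]
  · rintro ⟨q, hq, hqx⟩
    refine ⟨q.natDegree, fun i => (q.coeff i : R[X]).coeff (q.natDegree - i),
      fun i _ => (q.coeff i).2 _, ?_⟩
    have hcoeff := congrArg (coeff · q.natDegree) hqx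
    simp only [eval₂_eq_sum_range, finsetSum_coeff, coeff_zero] at hcoeff
    rw [sum_range_succ, hq.coeff_natDegree, add_comm] at hcoeff
    rw [← hcoeff]
    congr 1
    · simp [monomial_pow]
    · refine sum_congr rfl fun i hi => ?_
      change _ = ((q.coeff i : R[X]) * _).coeff _
      rw [monomial_pow, one_mul, ← coeff_mul_monomial,
        Nat.sub_add_cancel (mem_range.1 hi).le]

noncomputable def intClIdeal (I : Ideal R) : Ideal R :=
  Submodule.comap (monomial 1 : R →ₗ[R] R[X])
    ((integralClosure (reesAlgebra I) R[X]).restrictScalars R).toSubmodule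

theorem mem_intClIdeal : x ∈ I.intClIdeal ↔ x ∈ I.intCl :=
  mem_intCl_iff_monomial_mem_integralClosure.symm

theorem coe_intClIdeal : (I.intClIdeal : Set R) = I.intCl :=
  Set.ext fun _ => mem_intClIdeal

theorem apply_mem_intCl {S F : Type*} [CommRing S] [FunLike F R S] [RingHomClass F R S]
    (g : F) {J : Ideal S} (hIJ : I.map g ≤ J) (hx : x ∈ I.intCl) : g x ∈ J.intCl := by
  obtain ⟨n, hn, a, ha, hax⟩ := hx
  refine ⟨n, hn, g ∘ a, fun j hj => ?_, by simpa using congrArg g hax⟩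
  exact pow_right_mono hIJ j (Ideal.map_pow g I j ▸ mem_map_of_mem g (ha j hj))

theorem mem_intCl_of_pow_mem_pow {j : ℕ} (hj : 0 < j) (h : x ^ j ∈ I ^ j) : x ∈ I.intCl :=
  ⟨j, hj, fun i => if i = j then -x ^ j else 0,
    fun i _ => by dsimp only; split_ifs with hi; exacts [by subst hi; exact neg_mem h, zero_mem _],
    by simp [Nat.one_le_iff_ne_zero.2 hj.ne']⟩

end Ideal

theorem Submodule.mem_of_forall_sum_pow_smul_mem {K V ι : Type*} [Field K] [AddCommGroup V]
    [Module K V] (P : Submodule K V) {μ : ι → K} {s : Finset ι} (hμ : Set.InjOn μ s)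
    {c : ι → V} (h : ∀ m : ℕ, ∑ i ∈ s, μ i ^ m • c i ∈ P) : ∀ i ∈ s, c i ∈ P := by
  classical
  induction s using Finset.induction_on generalizing c with
  | empty => simp
  | insert b s hb ih =>
    -- `∑ μ i ^ m (μ i - μ b) c i` is a combination of two given sums and does not involve `c b`
    have hs : ∀ i ∈ s, c i ∈ P := by
      have hdiff (m : ℕ) : ∑ i ∈ s, μ i ^ m • (μ i - μ b) • c i ∈ P := by
        convert P.sub_mem (h (m + 1)) (P.smul_mem (μ b) (h m)) using 1
        rw [smul_sum, ← sum_sub_distrib, sum_insert hb, smul_smul, ← pow_succ', sub_self,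
          zero_add]
        exact sum_congr rfl fun i _ => by module
      intro i hi
      have hne : μ i - μ b ≠ 0 :=
        sub_ne_zero.2 fun e => hb (hμ (by simp [hi]) (by simp) e ▸ hi)
      exact (P.smul_mem_iff hne).1 (ih (hμ.mono (by simp)) hdiff i hi)
    have hcb : c b ∈ P := by
      have h0 := h 0
      simp only [pow_zero, one_smul, sum_insert hb] at h0
      exact (P.add_mem_iff_left (P.sum_mem hs)).1 h0
    simpa [hcb] using hs

namespace MvPolynomial

variable {σ R : Type*} [CommSemiring R]

noncomputable def scaleVars (t : σ → R) : MvPolynomial σ R →ₐ[R] MvPolynomial σ R :=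
  aeval fun i => C (t i) * X i

theorem scaleVars_monomial (t : σ → R) (a : σ →₀ ℕ) (c : R) :
    scaleVars t (monomial a c) = (a.prod fun i e => t i ^ e) • monomial a c := by
  have hX : (a.prod fun i e => (X i : MvPolynomial σ R) ^ e) = monomial a 1 :=
    prod_X_pow_eq_monomial
  simp only [scaleVars, aeval_monomial, mul_pow, Finsupp.prod_mul, ← C_pow, ← map_finsuppProd,
    hX, algebraMap_eq, smul_monomial, C_mul_monomial, smul_eq_mul]
  rw [mul_one, mul_comm]

theorem scaleVars_eq_sum (t : σ → R) (f : MvPolynomial σ R) :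
    scaleVars t f = ∑ a ∈ f.support, (a.prod fun i e => t i ^ e) • monomial a (f.coeff a) := by
  conv_lhs => rw [← f.support_sum_monomial_coeff]
  simp only [map_sum, scaleVars_monomial]

theorem map_span_monomial_one {S : Type*} [CommSemiring S] (φ : R →+* S) (A : Set (σ →₀ ℕ)) :
    (Ideal.span ((fun a => monomial a (1 : R)) '' A)).map (map φ) =
      Ideal.span ((fun a => monomial a (1 : S)) '' A) := by
  rw [Ideal.map_span, ← Set.image_comp]
  simp only [Function.comp_def, map_monomial, map_one]

theorem monomial_coeff_mem_of_forall_scaleVars_mem {K : Type*} [Field K]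
    (J : Submodule K (MvPolynomial σ K)) (hJ : ∀ s : σ → K, ∀ g ∈ J, scaleVars s g ∈ J)
    {t : σ → K} (ht : Function.Injective fun a : σ →₀ ℕ => a.prod fun i e => t i ^ e)
    {f : MvPolynomial σ K} (hf : f ∈ J) {a : σ →₀ ℕ} (ha : a ∈ f.support) :
    monomial a (f.coeff a) ∈ J := by
  refine J.mem_of_forall_sum_pow_smul_mem (c := fun b => monomial b (f.coeff b)) ht.injOn
    (fun m => ?_) a ha
  have hprod (b : σ →₀ ℕ) :
      (b.prod fun i e => (t ^ m) i ^ e) = (b.prod fun i e => t i ^ e) ^ m := by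
    simp only [Finsupp.prod, Pi.pow_apply, ← prod_pow, ← pow_mul, mul_comm]
  simpa only [scaleVars_eq_sum, hprod] using hJ (t ^ m) f hf

theorem injective_prod_algebraMap_X_pow {A : Type*} [CommRing A] [IsDomain A] :
    Function.Injective fun a : σ →₀ ℕ =>
      a.prod fun i e =>
        algebraMap (MvPolynomial σ A) (FractionRing (MvPolynomial σ A)) (X i) ^ e := by
  intro a b h
  have hX (c : σ →₀ ℕ) : (c.prod fun i e => (X i : MvPolynomial σ A) ^ e) = monomial c 1 :=
    prod_X_pow_eq_monomial
  simp only [← map_pow, ← map_finsuppProd, hX] at h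
  exact monomial_left_injective one_ne_zero (IsFractionRing.injective _ _ h)

end MvPolynomial

open MvPolynomial

namespace IsMonomialIdeal

variable {k : Type*} [Field k] {d : ℕ} {I J : Ideal (MvPolynomial (Fin d) k)}

theorem _root_.isMonomialIdeal_iff :
    IsMonomialIdeal I ↔ ∀ f ∈ I, ∀ a ∈ f.support, monomial a (1 : k) ∈ I := by
  constructor
  · rintro ⟨S, rfl⟩ f hf a ha
    obtain ⟨s, hs, hsa⟩ := mem_ideal_span_monomial_image.1 hf a ha
    refine mem_ideal_span_monomial_image.2 fun b hb => ⟨s, hs, ?_⟩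
    rwa [mem_singleton.1 (support_monomial_subset hb)]
  · refine fun h => ⟨{a | monomial a 1 ∈ I}, le_antisymm (fun f hf => ?_) ?_⟩
    · exact mem_ideal_span_monomial_image.2 fun a ha => ⟨a, h f hf a ha, le_rfl⟩
    · exact Ideal.span_le.2 (by rintro _ ⟨a, ha, rfl⟩; exact ha)

theorem monomial_one_mem (hI : IsMonomialIdeal I) {f : MvPolynomial (Fin d) k} (hf : f ∈ I)
    {a : Fin d →₀ ℕ} (ha : a ∈ f.support) : monomial a 1 ∈ I :=
  isMonomialIdeal_iff.1 hI f hf a ha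

theorem _root_.isMonomialIdeal_top : IsMonomialIdeal (⊤ : Ideal (MvPolynomial (Fin d) k)) :=
  isMonomialIdeal_iff.2 fun _ _ _ _ => Submodule.mem_top

theorem _root_.isMonomialIdeal_span_X :
    IsMonomialIdeal (Ideal.span (Set.range (X : Fin d → MvPolynomial (Fin d) k))) :=
  ⟨Set.range fun i => Finsupp.single i 1, by rw [← Set.range_comp]; rfl⟩

theorem mul (hI : IsMonomialIdeal I) (hJ : IsMonomialIdeal J) : IsMonomialIdeal (I * J) := by
  obtain ⟨S, rfl⟩ := hI
  obtain ⟨T, rfl⟩ := hJ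
  refine ⟨Set.image2 (· + ·) S T, ?_⟩
  have hmul (a b : Fin d →₀ ℕ) : monomial (a + b) (1 : k) = monomial a 1 * monomial b 1 := by
    rw [monomial_mul, one_mul]
  rw [Ideal.span_mul_span', ← Set.image2_mul]
  exact congrArg Ideal.span
    (Set.image_image2_distrib (f := (· + ·)) (g := fun a => monomial a (1 : k)) hmul).symm

theorem pow (hI : IsMonomialIdeal I) (n : ℕ) : IsMonomialIdeal (I ^ n) := by
  induction n with
  | zero => rw [pow_zero, Ideal.one_eq_top]; exact isMonomialIdeal_top
  | succ n ih => rw [pow_succ]; exact ih.mul hI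

theorem map_scaleVars_le (hI : IsMonomialIdeal I) (t : Fin d → k) :
    I.map (scaleVars t) ≤ I := by
  obtain ⟨S, rfl⟩ := hI
  rw [Ideal.map_span, Ideal.span_le]
  rintro _ ⟨_, ⟨a, ha, rfl⟩, rfl⟩
  rw [scaleVars_monomial]
  exact Submodule.smul_of_tower_mem _ _ (Ideal.subset_span ⟨a, ha, rfl⟩)

theorem exists_pow_mem_pow_of_monomial_mem_intCl (hI : IsMonomialIdeal I) {a : Fin d →₀ ℕ}
    {c : k} (hc : c ≠ 0) (h : monomial a c ∈ I.intCl) :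
    ∃ j, 0 < j ∧ monomial a 1 ^ j ∈ I ^ j := by
  obtain ⟨n, -, b, hb, hbx⟩ := h
  have hcoeff : c ^ n + ∑ j ∈ Icc 1 n, (b j).coeff (j • a) * c ^ (n - j) = 0 := by
    have := congrArg (coeff (n • a)) hbx
    rw [coeff_add, coeff_sum, monomial_pow, coeff_monomial, if_pos rfl, coeff_zero] at this
    rw [← this]
    refine congrArg _ (sum_congr rfl fun j hj => ?_)
    have hsplit : n • a = j • a + (n - j) • a := by
      rw [← add_smul, Nat.add_sub_cancel' (mem_Icc.1 hj).2]
    rw [monomial_pow, hsplit, coeff_mul_monomial]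
  obtain ⟨j, hj, hne⟩ : ∃ j ∈ Icc 1 n, (b j).coeff (j • a) ≠ 0 := by
    by_contra! hall
    rw [sum_eq_zero fun j hj => by rw [hall j hj, zero_mul], add_zero] at hcoeff
    exact pow_ne_zero n hc hcoeff
  refine ⟨j, (mem_Icc.1 hj).1, ?_⟩
  rw [monomial_pow, one_pow]
  exact (hI.pow j).monomial_one_mem (hb j hj) (mem_support_iff.2 hne)

theorem map_mvPolynomialMap {K : Type*} [Field K] (hI : IsMonomialIdeal I) (φ : k →+* K) :
    IsMonomialIdeal (I.map (map φ)) := by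
  obtain ⟨S, rfl⟩ := hI
  exact ⟨S, map_span_monomial_one φ S⟩

theorem monomial_one_mem_of_mem_map {K : Type*} [Field K] (hI : IsMonomialIdeal I)
    (φ : k →+* K) {a : Fin d →₀ ℕ} (h : monomial a (1 : K) ∈ I.map (map φ)) :
    monomial a (1 : k) ∈ I := by
  obtain ⟨S, rfl⟩ := hI
  rw [map_span_monomial_one, mem_ideal_span_monomial_image] at h
  rw [mem_ideal_span_monomial_image]
  simpa [MvPolynomial.support_monomial] using h

theorem monomial_one_mem_intCl (hI : IsMonomialIdeal I) {f : MvPolynomial (Fin d) k}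
    (hf : f ∈ I.intCl) {a : Fin d →₀ ℕ} (ha : a ∈ f.support) : monomial a 1 ∈ I.intCl := by
  let K := FractionRing (MvPolynomial (Fin d) k)
  let φ : k →+* K := (algebraMap (MvPolynomial (Fin d) k) K).comp C
  have hIK := hI.map_mvPolynomialMap φ
  have hfK : map φ f ∈ (I.map (map φ)).intCl := Ideal.apply_mem_intCl _ le_rfl hf
  have haK : a ∈ (map φ f).support := by rwa [support_map_of_injective _ φ.injective]
  have hcomp : monomial a ((map φ f).coeff a) ∈ (I.map (map φ)).intCl := by
    rw [← Ideal.mem_intClIdeal] at hfK ⊢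
    refine monomial_coeff_mem_of_forall_scaleVars_mem
      ((I.map (map φ)).intClIdeal.restrictScalars K) (fun s g hg => ?_)
      injective_prod_algebraMap_X_pow hfK haK
    rw [Submodule.restrictScalars_mem, Ideal.mem_intClIdeal] at hg ⊢
    exact Ideal.apply_mem_intCl _ (hIK.map_scaleVars_le s) hg
  obtain ⟨j, hj, hmem⟩ :=
    hIK.exists_pow_mem_pow_of_monomial_mem_intCl (mem_support_iff.1 haK) hcomp
  refine Ideal.mem_intCl_of_pow_mem_pow hj ?_
  rw [monomial_pow, one_pow, ← Ideal.map_pow] at hmem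
  rw [monomial_pow, one_pow]
  exact (hI.pow j).monomial_one_mem_of_mem_map φ hmem

end IsMonomialIdeal

/-- If `I` is a monomial ideal then `M I` is a monomial ideal, and the integral
closure of `I` is a monomial ideal. -/
theorem monomial_ideal_stable (k : Type*) [Field k] (d : ℕ)
    (I : Ideal (MvPolynomial (Fin d) k)) (hI : IsMonomialIdeal I)
    (M : Ideal (MvPolynomial (Fin d) k))
    (hM : M = Ideal.span (Set.range (MvPolynomial.X : Fin d → MvPolynomial (Fin d) k))) :
    IsMonomialIdeal (M * I) ∧
      ∃ J : Ideal (MvPolynomial (Fin d) k),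
        (J : Set (MvPolynomial (Fin d) k)) = I.intCl ∧ IsMonomialIdeal J := by
  refine ⟨hM ▸ isMonomialIdeal_span_X.mul hI, I.intClIdeal, Ideal.coe_intClIdeal,
    isMonomialIdeal_iff.2 fun _ hf _ ha => ?_⟩
  exact Ideal.mem_intClIdeal.2 (hI.monomial_one_mem_intCl (Ideal.mem_intClIdeal.1 hf) ha)
end

section
/- Let R = k[x,y,z], I_1 = (x, y^2, yz, z^2) and I_2 = (x^2, y, z), and I = I_1 I_2. Then μ(I) = 7 and o(I) = 2 (with respect to M = (x,y,z)), so μ(I) > o(I)^2 + 2. -/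
noncomputable section
open MvPolynomial

variable {k : Type*}

def dd : Fin 7 → (Fin 3 →₀ ℕ)
  | ⟨0,_⟩ => Finsupp.single 0 3
  | ⟨1,_⟩ => Finsupp.single 0 1 + Finsupp.single 1 1
  | ⟨2,_⟩ => Finsupp.single 0 1 + Finsupp.single 2 1
  | ⟨3,_⟩ => Finsupp.single 1 3
  | ⟨4,_⟩ => Finsupp.single 1 2 + Finsupp.single 2 1
  | ⟨5,_⟩ => Finsupp.single 1 1 + Finsupp.single 2 2
  | ⟨6,_⟩ => Finsupp.single 2 3

def ww : Fin 7 → Fin 3 → ℕ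
  | ⟨0,_⟩ => ![3,0,0]
  | ⟨1,_⟩ => ![1,1,0]
  | ⟨2,_⟩ => ![1,0,1]
  | ⟨3,_⟩ => ![0,3,0]
  | ⟨4,_⟩ => ![0,2,1]
  | ⟨5,_⟩ => ![0,1,2]
  | ⟨6,_⟩ => ![0,0,3]

lemma dd_apply (i : Fin 7) (t : Fin 3) : dd i t = ww i t := by
  fin_cases i <;> fin_cases t <;>
    simp [dd, ww, Finsupp.single_apply]

lemma dd_inj : Function.Injective dd := by
  have key : ∀ i j : Fin 7, (∀ t, ww i t = ww j t) → i = j := by decide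
  intro i j h
  exact key i j fun t => by rw [← dd_apply, ← dd_apply, h]

def gg [Field k] : Fin 7 → MvPolynomial (Fin 3) k
  | ⟨0,_⟩ => px^3
  | ⟨1,_⟩ => px*py
  | ⟨2,_⟩ => px*pz
  | ⟨3,_⟩ => py^3
  | ⟨4,_⟩ => py^2*pz
  | ⟨5,_⟩ => py*pz^2
  | ⟨6,_⟩ => pz^3

lemma gg_eq [Field k] (i : Fin 7) : gg (k := k) i = monomial (dd i) 1 := by
  fin_cases i <;>
    simp [gg, dd, px, py, pz, X, X_pow_eq_monomial, monomial_mul, monomial_pow,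
      Finsupp.smul_single, Finsupp.single_add]

variable [Field k]

lemma mem_span_gg {x c : MvPolynomial (Fin 3) k} (i : Fin 7) (h : x = c * gg i) :
    x ∈ Ideal.span (Set.range (gg (k := k))) :=
  h ▸ Ideal.mul_mem_left _ c (Ideal.subset_span ⟨i, rfl⟩)

lemma span_gg :
    Ideal.span (Set.range (gg (k := k))) =
      Ideal.span {px, py ^ 2, py * pz, pz ^ 2} * Ideal.span {px ^ 2, py, pz} := by
  apply le_antisymm
  · rw [Ideal.span_le]
    rintro _ ⟨i, rfl⟩
    have mm : ∀ a b : MvPolynomial (Fin 3) k,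
        a ∈ ({px, py ^ 2, py * pz, pz ^ 2} : Set _) → b ∈ ({px ^ 2, py, pz} : Set _) →
        a * b ∈ Ideal.span {px, py ^ 2, py * pz, pz ^ 2} * Ideal.span {px ^ 2, py, pz} :=
      fun a b ha hb => Ideal.mul_mem_mul (Ideal.subset_span ha) (Ideal.subset_span hb)
    fin_cases i
    · exact (show gg (k := k) ⟨0, by omega⟩ = px * px ^ 2 by simp [gg]; try ring) ▸
        mm _ _ (by simp) (by simp)
    · exact (show gg (k := k) ⟨1, by omega⟩ = px * py by simp [gg]) ▸
        mm _ _ (by simp) (by simp)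
    · exact (show gg (k := k) ⟨2, by omega⟩ = px * pz by simp [gg]) ▸
        mm _ _ (by simp) (by simp)
    · exact (show gg (k := k) ⟨3, by omega⟩ = py ^ 2 * py by simp [gg]; try ring) ▸
        mm _ _ (by simp) (by simp)
    · exact (show gg (k := k) ⟨4, by omega⟩ = py ^ 2 * pz by simp [gg]) ▸
        mm _ _ (by simp) (by simp)
    · exact (show gg (k := k) ⟨5, by omega⟩ = py * pz * pz by simp [gg]; try ring) ▸
        mm _ _ (by simp) (by simp)
    · exact (show gg (k := k) ⟨6, by omega⟩ = pz ^ 2 * pz by simp [gg]; try ring) ▸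
        mm _ _ (by simp) (by simp)
  · rw [Ideal.span_mul_span', Ideal.span_le]
    rintro x hx
    rw [Set.mem_mul] at hx
    obtain ⟨a, ha, b, hb, rfl⟩ := hx
    simp only [Set.mem_insert_iff, Set.mem_singleton_iff] at ha hb
    rcases ha with rfl | rfl | rfl | rfl <;> rcases hb with rfl | rfl | rfl
    · exact mem_span_gg 0 (show _ = 1 * gg 0 by simp [gg]; try ring)
    · exact mem_span_gg 1 (show _ = 1 * gg 1 by simp [gg]; try ring)
    · exact mem_span_gg 2 (show _ = 1 * gg 2 by simp [gg]; try ring)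
    · exact mem_span_gg 1 (show _ = (px*py) * gg 1 by simp [gg]; try ring)
    · exact mem_span_gg 3 (show _ = 1 * gg 3 by simp [gg]; try ring)
    · exact mem_span_gg 4 (show _ = 1 * gg 4 by simp [gg]; try ring)
    · exact mem_span_gg 1 (show _ = (px*pz) * gg 1 by simp [gg]; try ring)
    · exact mem_span_gg 4 (show _ = 1 * gg 4 by simp [gg]; try ring)
    · exact mem_span_gg 5 (show _ = 1 * gg 5 by simp [gg]; try ring)
    · exact mem_span_gg 2 (show _ = (px*pz) * gg 2 by simp [gg]; try ring)
    · exact mem_span_gg 5 (show _ = 1 * gg 5 by simp [gg]; try ring)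
    · exact mem_span_gg 6 (show _ = 1 * gg 6 by simp [gg]; try ring)

/-- The monomial exponent set generating `M * I`. -/
def SS : Set (Fin 3 →₀ ℕ) :=
  Set.range fun q : Fin 3 × Fin 7 => Finsupp.single q.1 1 + dd q.2

lemma MI_le_monomial_span :
    Ideal.span {px, py, pz} * Ideal.span (Set.range (gg (k := k))) ≤
      Ideal.span ((fun s => monomial s (1 : k)) '' SS) := by
  rw [Ideal.span_mul_span', Ideal.span_le]
  rintro x hx
  rw [Set.mem_mul] at hx
  obtain ⟨a, ha, b, ⟨j, rfl⟩, rfl⟩ := hx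
  simp only [Set.mem_insert_iff, Set.mem_singleton_iff] at ha
  have key : ∀ c : Fin 3, (X c : MvPolynomial (Fin 3) k) * gg j ∈
      Ideal.span ((fun s => monomial s (1 : k)) '' SS) := by
    intro c
    refine Ideal.subset_span ⟨Finsupp.single c 1 + dd j, ⟨(c, j), rfl⟩, ?_⟩
    rw [gg_eq]
    simp [X, monomial_mul]
  rcases ha with rfl | rfl | rfl
  · exact key 0
  · exact key 1
  · exact key 2

lemma coeff_dd_zero {p : MvPolynomial (Fin 3) k}
    (hp : p ∈ Ideal.span {px, py, pz} * Ideal.span (Set.range (gg (k := k))))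
    (i : Fin 7) : coeff (dd i) p = 0 := by
  by_contra hne
  have hsupp : dd i ∈ p.support := mem_support_iff.mpr hne
  obtain ⟨s, ⟨⟨c, j⟩, rfl⟩, hle⟩ :=
    mem_ideal_span_monomial_image.mp (MI_le_monomial_span hp) _ hsupp
  have hle' : ∀ t : Fin 3, (if c = t then 1 else 0) + ww j t ≤ ww i t := by
    intro t
    have h := hle t
    simpa [Finsupp.add_apply, Finsupp.single_apply, dd_apply] using h
  have key : ∀ (c : Fin 3) (j i : Fin 7),
      ¬ ∀ t : Fin 3, (if c = t then 1 else 0) + ww j t ≤ ww i t := by decide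
  exact key c j i hle'

lemma sub_C_mem_M (r : MvPolynomial (Fin 3) k) :
    r - C (constantCoeff r) ∈ Ideal.span {px, py, pz} := by
  have hset : ({px, py, pz} : Set (MvPolynomial (Fin 3) k)) =
      X '' (Set.univ : Set (Fin 3)) := by
    ext q
    simp only [Set.image_univ, Set.mem_range, Set.mem_insert_iff, Set.mem_singleton_iff,
      px, py, pz]
    constructor
    · rintro (rfl | rfl | rfl)
      exacts [⟨0, rfl⟩, ⟨1, rfl⟩, ⟨2, rfl⟩]
    · rintro ⟨i, rfl⟩
      fin_cases i <;> simp
  rw [hset, mem_ideal_span_X_image]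
  intro m hm
  have hm0 : m ≠ 0 := by
    rintro rfl
    rw [mem_support_iff] at hm
    apply hm
    simp [coeff_sub, ← constantCoeff_eq]
  obtain ⟨i, hi⟩ := Finsupp.ne_iff.mp hm0
  exact ⟨i, trivial, by simpa using hi⟩

/-- The ideal of polynomials all of whose monomials have degree at least `n`. -/
def degGE (n : ℕ) : Ideal (MvPolynomial (Fin 3) k) where
  carrier := {p | ∀ m ∈ p.support, n ≤ m 0 + m 1 + m 2}
  zero_mem' := by simp
  add_mem' := by
    classical
    intro a b ha hb m hm
    rcases Finset.mem_union.mp (MvPolynomial.support_add hm) with h | h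
    · exact ha m h
    · exact hb m h
  smul_mem' := by
    classical
    intro c x hx m hm
    rw [smul_eq_mul] at hm
    obtain ⟨u, hu, v, hv, rfl⟩ := Finset.mem_add.mp (MvPolynomial.support_mul c x hm)
    have := hx v hv
    simp only [Finsupp.add_apply]
    omega

lemma M_le_degGE1 : Ideal.span {px, py, pz} ≤ degGE (k := k) 1 := by
  rw [Ideal.span_le]
  rintro q hq
  simp only [Set.mem_insert_iff, Set.mem_singleton_iff] at hq
  have key : ∀ c : Fin 3, (X c : MvPolynomial (Fin 3) k) ∈ degGE (k := k) 1 := by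
    intro c m hm
    rw [support_X, Finset.mem_singleton] at hm
    subst hm
    fin_cases c <;> simp [Finsupp.single_apply]
  rcases hq with rfl | rfl | rfl
  exacts [key 0, key 1, key 2]

lemma degGE_mul (a b : ℕ) : degGE (k := k) a * degGE b ≤ degGE (a + b) := by
  classical
  rw [Ideal.mul_le]
  intro r hr s hs m hm
  obtain ⟨u, hu, v, hv, rfl⟩ := Finset.mem_add.mp (MvPolynomial.support_mul r s hm)
  have h1 := hr u hu
  have h2 := hs v hv
  simp only [Finsupp.add_apply]
  omega

lemma M3_le_degGE3 : (Ideal.span {px, py, pz} : Ideal (MvPolynomial (Fin 3) k)) ^ 3 ≤ degGE 3 := by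
  have h1 := M_le_degGE1 (k := k)
  calc (Ideal.span {px, py, pz} : Ideal (MvPolynomial (Fin 3) k)) ^ 3
      = Ideal.span {px, py, pz} * Ideal.span {px, py, pz} * Ideal.span {px, py, pz} := by
        ring
    _ ≤ degGE 1 * degGE 1 * degGE 1 := Ideal.mul_mono (Ideal.mul_mono h1 h1) h1
    _ ≤ degGE 2 * degGE 1 := Ideal.mul_mono_left (by simpa using degGE_mul (k := k) 1 1)
    _ ≤ degGE 3 := by simpa using degGE_mul (k := k) 2 1

lemma xy_not_mem_M3 :
    (px * py : MvPolynomial (Fin 3) k) ∉ (Ideal.span {px, py, pz}) ^ 3 := by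
  intro h
  have h2 := M3_le_degGE3 h (dd 1)
  have hxy : (px * py : MvPolynomial (Fin 3) k) = monomial (dd 1) 1 := gg_eq 1
  have h3 := h2 (by classical
    rw [hxy, support_monomial, if_neg (one_ne_zero' k)]
    exact Finset.mem_singleton_self _)
  rw [dd_apply, dd_apply, dd_apply] at h3
  simp [ww] at h3

/-- The linear map recording the coefficients at the seven distinguished monomials. -/
def LL : MvPolynomial (Fin 3) k →ₗ[k] (Fin 7 → k) :=
  LinearMap.pi fun i => lcoeff k (dd i)

lemma seven_le_card (s : Finset (MvPolynomial (Fin 3) k))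
    (hspan : Ideal.span (↑s : Set (MvPolynomial (Fin 3) k)) =
      Ideal.span (Set.range (gg (k := k)))) : 7 ≤ s.card := by
  classical
  set L := LL (k := k) with hL
  have hz : ∀ q ∈ Ideal.span {px, py, pz} * Ideal.span (Set.range (gg (k := k))),
      L q = 0 := fun q hq => funext fun i => coeff_dd_zero hq i
  have main : ∀ p ∈ Ideal.span (↑s : Set (MvPolynomial (Fin 3) k)),
      L p ∈ Submodule.span k (⇑L '' ↑s) := by
    intro p hp
    induction hp using Submodule.span_induction with
    | mem x h => exact Submodule.subset_span ⟨x, h, rfl⟩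
    | zero => rw [map_zero]; exact zero_mem _
    | add x y hx hy ihx ihy => rw [map_add]; exact add_mem ihx ihy
    | smul r x hx ih =>
      have hxI : x ∈ Ideal.span (Set.range (gg (k := k))) := hspan ▸ hx
      have hdec : r • x = (constantCoeff r) • x + (r - C (constantCoeff r)) * x := by
        rw [smul_eq_mul, smul_eq_C_mul]; ring
      rw [hdec, map_add, map_smul, hz _ (Ideal.mul_mem_mul (sub_C_mem_M r) hxI), add_zero]
      exact Submodule.smul_mem _ _ ih
  have hLg : ∀ i : Fin 7, L (gg i) = Pi.single i 1 := by
    intro i; funext j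
    have h0 : L (gg i) j = coeff (dd j) (gg (k := k) i) := rfl
    rw [h0, gg_eq, coeff_monomial, Pi.single_apply]
    by_cases h : i = j
    · subst h; simp
    · rw [if_neg (fun hh => h (dd_inj hh)), if_neg (fun hh => h hh.symm)]
  have hstd : ∀ i : Fin 7, Pi.single i (1 : k) ∈ Submodule.span k (⇑L '' ↑s) := by
    intro i
    rw [← hLg i]
    exact main _ (hspan ▸ Ideal.subset_span ⟨i, rfl⟩)
  have htop : Submodule.span k (⇑L '' ↑s) = ⊤ := by
    rw [eq_top_iff]
    rintro v -
    have hv : v = ∑ i : Fin 7, Pi.single i (v i) := (Finset.univ_sum_single v).symm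
    rw [hv]
    refine Submodule.sum_mem _ fun i _ => ?_
    have hsm : Pi.single i (v i) = v i • (Pi.single i (1 : k) : Fin 7 → k) := by
      funext j
      simp [Pi.single_apply, mul_ite]
    rw [hsm]
    exact Submodule.smul_mem _ _ (hstd i)
  have h2 : Module.finrank k (Fin 7 → k) =
      Module.finrank k (Submodule.span k ((↑(s.image ⇑L) : Set (Fin 7 → k)))) := by
    rw [Finset.coe_image, htop, finrank_top]
  have h3 : Module.finrank k (Submodule.span k ((↑(s.image ⇑L) : Set (Fin 7 → k)))) ≤
      (s.image ⇑L).card := finrank_span_finset_le_card _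
  have h4 : (s.image ⇑L).card ≤ s.card := Finset.card_image_le
  have h5 : Module.finrank k (Fin 7 → k) = 7 := Module.finrank_fin_fun k
  omega

lemma gg_inj : Function.Injective (gg (k := k)) := by
  intro i j h
  rw [gg_eq, gg_eq] at h
  rcases (monomial_eq_monomial_iff _ _ _ _).mp h with ⟨h1, -⟩ | ⟨h1, -⟩
  · exact dd_inj h1
  · exact absurd h1 one_ne_zero

lemma mu_eq :
    (Ideal.span {px, py ^ 2, py * pz, pz ^ 2} *
      Ideal.span {(px : MvPolynomial (Fin 3) k) ^ 2, py, pz}).mu = 7 := by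
  have h7 : 7 ∈ {n : ℕ | ∃ s : Finset (MvPolynomial (Fin 3) k), s.card = n ∧
      Ideal.span (↑s : Set (MvPolynomial (Fin 3) k)) =
        Ideal.span {px, py ^ 2, py * pz, pz ^ 2} * Ideal.span {px ^ 2, py, pz}} := by
    classical
    refine ⟨Finset.image (gg (k := k)) Finset.univ, ?_, ?_⟩
    · rw [Finset.card_image_of_injective _ gg_inj, Finset.card_univ, Fintype.card_fin]
    · rw [Finset.coe_image, Finset.coe_univ, Set.image_univ, span_gg]
  refine le_antisymm (Nat.sInf_le h7) (le_csInf ⟨7, h7⟩ ?_)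
  rintro n ⟨s, rfl, hs⟩
  exact seven_le_card s (hs.trans span_gg.symm)

lemma ord_eq :
    Ideal.ord (Ideal.span {px, py, pz})
      (Ideal.span {px, py ^ 2, py * pz, pz ^ 2} *
        Ideal.span {(px : MvPolynomial (Fin 3) k) ^ 2, py, pz}) = 2 := by
  have hset : {n : ℕ | Ideal.span {px, py ^ 2, py * pz, pz ^ 2} *
      Ideal.span {(px : MvPolynomial (Fin 3) k) ^ 2, py, pz} ≤
        Ideal.span {px, py, pz} ^ n} = Set.Iic 2 := by
    ext n
    simp only [Set.mem_setOf_eq, Set.mem_Iic]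
    constructor
    · intro h
      by_contra hn
      have h3 : Ideal.span {px, py ^ 2, py * pz, pz ^ 2} *
          Ideal.span {(px : MvPolynomial (Fin 3) k) ^ 2, py, pz} ≤
            Ideal.span {px, py, pz} ^ 3 :=
        le_trans h (Ideal.pow_le_pow_right (by omega))
      have hxy : px * py ∈ Ideal.span {px, py ^ 2, py * pz, pz ^ 2} *
          Ideal.span {(px : MvPolynomial (Fin 3) k) ^ 2, py, pz} :=
        Ideal.mul_mem_mul (Ideal.subset_span (by simp)) (Ideal.subset_span (by simp))
      exact xy_not_mem_M3 (h3 hxy)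
    · intro hn
      have hI1 : Ideal.span {px, py ^ 2, py * pz, pz ^ 2} ≤
          (Ideal.span {px, py, pz} : Ideal (MvPolynomial (Fin 3) k)) := by
        rw [Ideal.span_le]
        rintro q hq
        simp only [Set.mem_insert_iff, Set.mem_singleton_iff] at hq
        rcases hq with rfl | rfl | rfl | rfl
        · exact Ideal.subset_span (by simp)
        · rw [sq]; exact Ideal.mul_mem_left _ _ (Ideal.subset_span (by simp))
        · exact Ideal.mul_mem_left _ _ (Ideal.subset_span (by simp))
        · rw [sq]; exact Ideal.mul_mem_left _ _ (Ideal.subset_span (by simp))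
      have hI2 : Ideal.span {(px : MvPolynomial (Fin 3) k) ^ 2, py, pz} ≤
          (Ideal.span {px, py, pz} : Ideal (MvPolynomial (Fin 3) k)) := by
        rw [Ideal.span_le]
        rintro q hq
        simp only [Set.mem_insert_iff, Set.mem_singleton_iff] at hq
        rcases hq with rfl | rfl | rfl
        · rw [sq]; exact Ideal.mul_mem_left _ _ (Ideal.subset_span (by simp))
        · exact Ideal.subset_span (by simp)
        · exact Ideal.subset_span (by simp)
      have h2 : Ideal.span {px, py ^ 2, py * pz, pz ^ 2} *
          Ideal.span {(px : MvPolynomial (Fin 3) k) ^ 2, py, pz} ≤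
            Ideal.span {px, py, pz} ^ 2 := by
        have hsq : (Ideal.span {px, py, pz} : Ideal (MvPolynomial (Fin 3) k)) ^ 2 =
            Ideal.span {px, py, pz} * Ideal.span {px, py, pz} := sq _
        rw [hsq]; exact Ideal.mul_mono hI1 hI2
      exact le_trans h2 (Ideal.pow_le_pow_right hn)
  rw [Ideal.ord, hset, csSup_Iic]

/-- For `I = I₁ I₂` with `I₁ = (x, y², yz, z²)` and `I₂ = (x², y, z)`:
`μ(I) = 7`, `o(I) = 2`, and `μ(I) > o(I)² + 2`. -/
theorem mu_I1I2_exceeds_bound (k : Type*) [Field k] :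
    let M : Ideal (MvPolynomial (Fin 3) k) := Ideal.span {px, py, pz}
    let I₁ : Ideal (MvPolynomial (Fin 3) k) := Ideal.span {px, py ^ 2, py * pz, pz ^ 2}
    let I₂ : Ideal (MvPolynomial (Fin 3) k) := Ideal.span {px ^ 2, py, pz}
    (I₁ * I₂).mu = 7 ∧ Ideal.ord M (I₁ * I₂) = 2 ∧
      Ideal.ord M (I₁ * I₂) ^ 2 + 2 < (I₁ * I₂).mu := by
  intro M I₁ I₂
  refine ⟨mu_eq, ord_eq, ?_⟩
  rw [show Ideal.ord M (I₁ * I₂) = 2 from ord_eq, show (I₁ * I₂).mu = 7 from mu_eq]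
  norm_num

end
end
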